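/- arXiv:2010.14428 — 4 statements merged into one kernel-verified Lean document; each statement's English description precedes it below -/
import Mathlib

section
/- The free-endpoint value function is monotonically increasing with respect to the length of the sequence of sets: for every x₀ ∈ ℝ², every finite sequence of sets [𝒯₀, …, 𝒯_N] with 𝒯ᵢ ⊆ ℝ², and every 1 ≤ M ≤ N + 1, one has V(x₀, [𝒯₀, …, 𝒯_{M−1}]) ≤ V(x₀, [𝒯₀, …, 𝒯_N]). -/
open scoped ENNReal
open MeasureTheory

noncomputable section

/-- The state space `ℝ²` with the Euclidean norm. -/
abbrev E2 : Type := EuclideanSpace ℝ (Fin 2)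

/-- `Feasible m f J N T x₀ x u t` says that `(x, u, t)` is a feasible trajectory through the
finite sequence of sets `[T 0, …, T N]` starting at `x₀`: the times are nondecreasing, the
trajectory starts at `x₀`, it satisfies the dynamics `ẋ = f(x, u)` on `[t 0, t (N+1)]`,
stays in `T i` on `[t i, t (i+1)]`, and the running cost is integrable. -/
def Feasible (m : ℕ) (f : E2 × (Fin m → ℝ) → E2) (J : E2 × (Fin m → ℝ) × ℝ → ℝ)
    (N : ℕ) (T : Fin (N + 1) → Set E2) (x₀ : E2)
    (x : ℝ → E2) (u : ℝ → Fin m → ℝ) (t : Fin (N + 2) → ℝ) : Prop :=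
  Monotone t ∧
  x (t 0) = x₀ ∧
  (∀ τ ∈ Set.Icc (t 0) (t (Fin.last (N + 1))), HasDerivAt x (f (x τ, u τ)) τ) ∧
  (∀ i : Fin (N + 1), ∀ τ ∈ Set.Icc (t i.castSucc) (t i.succ), x τ ∈ T i) ∧
  IntervalIntegrable (fun τ => J (x τ, u τ, τ)) volume (t 0) (t (Fin.last (N + 1)))

/-- The cost of a trajectory: `ENNReal.ofReal` of the integral of the running cost. -/
def cost (m : ℕ) (J : E2 × (Fin m → ℝ) × ℝ → ℝ)
    (N : ℕ) (x : ℝ → E2) (u : ℝ → Fin m → ℝ) (t : Fin (N + 2) → ℝ) : ℝ≥0∞ :=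
  ENNReal.ofReal (∫ τ in (t 0)..(t (Fin.last (N + 1))), J (x τ, u τ, τ))

/-- The free-endpoint value function `V(x₀, [T 0, …, T N])`: the infimum (in `ℝ≥0∞`) of the
costs of all feasible trajectories through `[T 0, …, T N]` starting at `x₀`. -/
def V (m : ℕ) (f : E2 × (Fin m → ℝ) → E2) (J : E2 × (Fin m → ℝ) × ℝ → ℝ)
    (x₀ : E2) (N : ℕ) (T : Fin (N + 1) → Set E2) : ℝ≥0∞ :=
  sInf { c | ∃ x u t, Feasible m f J N T x₀ x u t ∧ c = cost m J N x u t }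

/-- The fixed-endpoint value function `Q(x₀, [T 0, …, T N], xf)`: the infimum (in `ℝ≥0∞`) of
the costs of all feasible trajectories through `[T 0, …, T N]` starting at `x₀` and ending
at `xf`. -/
def Q (m : ℕ) (f : E2 × (Fin m → ℝ) → E2) (J : E2 × (Fin m → ℝ) × ℝ → ℝ)
    (x₀ : E2) (N : ℕ) (T : Fin (N + 1) → Set E2) (xf : E2) : ℝ≥0∞ :=
  sInf { c | ∃ x u t, Feasible m f J N T x₀ x u t ∧ x (t (Fin.last (N + 1))) = xf ∧
    c = cost m J N x u t }

/-- **Lemma 2.** The free-endpoint value function is monotonically increasing with respect to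
the length of the sequence of sets: for `1 ≤ M ≤ N + 1`, the value of the prefix
`[T 0, …, T (M-1)]` is at most the value of the full sequence `[T 0, …, T N]`. -/
theorem free_endpoint_value_monotone
    (m : ℕ) (f : E2 × (Fin m → ℝ) → E2) (J : E2 × (Fin m → ℝ) × ℝ → ℝ)
    (hJ : ∀ x u t, 0 ≤ J (x, u, t))
    (x₀ : E2) (N : ℕ) (T : Fin (N + 1) → Set E2)
    (M : ℕ) (hM1 : 1 ≤ M) (hMN : M ≤ N + 1) :
    V m f J x₀ (M - 1) (fun i => T (Fin.castLE (by omega) i)) ≤ V m f J x₀ N T := by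
  apply le_sInf
  rintro c ⟨x, u, t, ⟨ht, hx₀, hderiv, hsets, hint⟩, rfl⟩
  have hle2 : M - 1 + 2 ≤ N + 2 := by omega
  set t' : Fin (M - 1 + 2) → ℝ := fun i => t (Fin.castLE hle2 i) with ht'
  have hmono' : Monotone t' := fun a b hab => ht hab
  have h00 : t' 0 = t 0 := by
    simp [ht', Fin.ext_iff]
  have hlast_le : t' (Fin.last (M - 1 + 1)) ≤ t (Fin.last (N + 1)) := by
    apply ht
    simp [Fin.le_def]
    omega
  have hle0 : t 0 ≤ t (Fin.last (N + 1)) := ht (Fin.zero_le _)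
  have hle0' : t' 0 ≤ t' (Fin.last (M - 1 + 1)) := hmono' (Fin.zero_le _)
  have hIcc : Set.Icc (t' 0) (t' (Fin.last (M - 1 + 1))) ⊆
      Set.Icc (t 0) (t (Fin.last (N + 1))) := by
    rw [h00]
    exact Set.Icc_subset_Icc le_rfl hlast_le
  have hfeas : Feasible m f J (M - 1) (fun i => T (Fin.castLE (by omega) i)) x₀ x u t' := by
    refine ⟨hmono', by rw [h00]; exact hx₀, fun τ hτ => hderiv τ (hIcc hτ), ?_, ?_⟩
    · intro i τ hτ
      have h1 : t' i.castSucc = t (Fin.castLE (by omega : M - 1 + 1 ≤ N + 1) i).castSucc := rfl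
      have h2 : t' i.succ = t (Fin.castLE (by omega : M - 1 + 1 ≤ N + 1) i).succ := rfl
      exact hsets (Fin.castLE (by omega) i) τ (by rw [h1, h2] at hτ; exact hτ)
    · apply hint.mono_set
      have e1 : Set.uIcc (t' 0) (t' (Fin.last (M - 1 + 1)))
          = Set.Icc (t' 0) (t' (Fin.last (M - 1 + 1))) := Set.uIcc_of_le hle0'
      have e2 : Set.uIcc (t 0) (t (Fin.last (N + 1)))
          = Set.Icc (t 0) (t (Fin.last (N + 1))) := Set.uIcc_of_le hle0
      rw [e1, e2]
      exact hIcc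
  refine le_trans (sInf_le ⟨x, u, t', hfeas, rfl⟩) ?_
  unfold cost
  apply ENNReal.ofReal_le_ofReal
  rw [h00]
  apply intervalIntegral.integral_mono_interval le_rfl (h00 ▸ hle0') hlast_le
  · filter_upwards with τ using hJ _ _ _
  · exact hint
end
end

section
/- For every x₀, x_f ∈ ℝ², every finite sequence of sets [𝒯₀, …, 𝒯_N] with 𝒯ᵢ ⊆ ℝ², and every 1 ≤ M ≤ N, the fixed-endpoint value satisfies the lower bound Q(x₀, [𝒯₀, …, 𝒯_N], x_f) ≥ ⨅_{p ∈ 𝒯_{M−1} ∩ 𝒯_M} ( Q(x₀, [𝒯₀, …, 𝒯_{M−1}], p) + Q(p, [𝒯_M, …, 𝒯_N], x_f) ), where the infimum is taken in ℝ≥0∞. -/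
open scoped ENNReal
open MeasureTheory

noncomputable section

/-- Principle-of-optimality inequality: for `1 ≤ M ≤ N`, the fixed-endpoint value of the full
sequence is bounded below by the infimum, over crossing points `p ∈ T (M-1) ∩ T M`, of the sum
of the fixed-endpoint values of the prefix `[T 0, …, T (M-1)]` (ending at `p`) and of the
suffix `[T M, …, T N]` (starting at `p`). -/
theorem fixed_endpoint_value_ge_iInf_split
    (m : ℕ) (f : E2 × (Fin m → ℝ) → E2) (J : E2 × (Fin m → ℝ) × ℝ → ℝ)
    (hJ : ∀ x u t, 0 ≤ J (x, u, t))
    (x₀ xf : E2) (N : ℕ) (T : Fin (N + 1) → Set E2)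
    (M : ℕ) (hM1 : 1 ≤ M) (hMN : M ≤ N) :
    ⨅ p ∈ (T ⟨M - 1, by omega⟩ ∩ T ⟨M, by omega⟩),
        (Q m f J x₀ (M - 1) (fun i => T (Fin.castLE (by omega) i)) p +
          Q m f J p (N - M) (fun i => T ⟨M + i.val, by have := i.isLt; omega⟩) xf)
      ≤ Q m f J x₀ N T xf := by
  refine le_sInf ?_
  rintro c ⟨x, u, t, ⟨hmono, hx0, hderiv, hmem, hint⟩, hend, rfl⟩
  have hMlt : M < N + 2 := by omega
  set p : E2 := x (t ⟨M, hMlt⟩) with hp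
  have ht0M : t 0 ≤ t ⟨M, hMlt⟩ := hmono (by simp [Fin.le_def])
  have htMlast : t ⟨M, hMlt⟩ ≤ t (Fin.last (N + 1)) := hmono (by simp [Fin.le_def]; try omega)
  have hpmem : p ∈ (T ⟨M - 1, by omega⟩ ∩ T ⟨M, by omega⟩) := by
    constructor
    · have := hmem ⟨M - 1, by omega⟩ (t ⟨M, hMlt⟩)
        ⟨hmono (by simp [Fin.le_def]; try omega), hmono (by simp [Fin.le_def]; try omega)⟩
      exact this
    · have := hmem ⟨M, by omega⟩ (t ⟨M, hMlt⟩)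
        ⟨hmono (by simp [Fin.le_def]), hmono (by simp [Fin.le_def]; try omega)⟩
      exact this
  refine le_trans (iInf₂_le p hpmem) ?_
  -- prefix times
  have hMeq : M - 1 + 1 = M := by omega
  set tp : Fin (M - 1 + 2) → ℝ := fun i => t ⟨i.val, by omega⟩ with htp
  set ts : Fin (N - M + 2) → ℝ := fun i => t ⟨M + i.val, by have := i.isLt; omega⟩ with hts
  have htp_last : tp (Fin.last (M - 1 + 1)) = t ⟨M, hMlt⟩ := by
    simp only [htp]; congr 1; exact Fin.ext (by simp; omega)
  have htp0 : tp 0 = t 0 := by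
    simp only [htp]; congr 1
  have hts0 : ts 0 = t ⟨M, hMlt⟩ := by
    simp only [hts]; exact congrArg t (Fin.ext (by simp))
  have hts_last : ts (Fin.last (N - M + 1)) = t (Fin.last (N + 1)) := by
    simp only [hts]; congr 1; exact Fin.ext (by simp [Fin.last]; omega)
  have hmemM : t ⟨M, hMlt⟩ ∈ Set.uIcc (t 0) (t (Fin.last (N + 1))) := by
    rw [Set.uIcc_of_le (ht0M.trans htMlast)]; exact ⟨ht0M, htMlast⟩
  have hint1 : IntervalIntegrable (fun τ => J (x τ, u τ, τ)) volume (t 0) (t ⟨M, hMlt⟩) :=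
    hint.mono_set (Set.uIcc_subset_uIcc Set.left_mem_uIcc hmemM)
  have hint2 : IntervalIntegrable (fun τ => J (x τ, u τ, τ)) volume (t ⟨M, hMlt⟩)
      (t (Fin.last (N + 1))) :=
    hint.mono_set (Set.uIcc_subset_uIcc hmemM Set.right_mem_uIcc)
  have hfeas1 : Feasible m f J (M - 1) (fun i => T (Fin.castLE (by omega) i)) x₀ x u tp := by
    refine ⟨?_, ?_, ?_, ?_, ?_⟩
    · intro i j hij
      exact hmono (show (⟨i.val, by omega⟩ : Fin (N + 2)) ≤ ⟨j.val, by omega⟩ from hij)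
    · rw [htp0]; exact hx0
    · intro τ hτ
      refine hderiv τ ⟨?_, ?_⟩
      · rw [← htp0]; exact hτ.1
      · exact hτ.2.trans (by rw [htp_last]; exact htMlast)
    · intro i τ hτ
      exact hmem ⟨i.val, by omega⟩ τ hτ
    · rw [htp0, htp_last]; exact hint1
  have hfeas2 : Feasible m f J (N - M)
      (fun i => T ⟨M + i.val, by have := i.isLt; omega⟩) p x u ts := by
    refine ⟨?_, ?_, ?_, ?_, ?_⟩
    · intro i j hij
      exact hmono (show (⟨M + i.val, by have := i.isLt; omega⟩ : Fin (N + 2)) ≤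
        ⟨M + j.val, by have := j.isLt; omega⟩ from Nat.add_le_add_left hij M)
    · rw [hts0]
    · intro τ hτ
      refine hderiv τ ⟨?_, ?_⟩
      · exact le_trans (by rw [hts0]; exact ht0M) hτ.1
      · rw [← hts_last]; exact hτ.2
    · intro i τ hτ
      have := hmem ⟨M + i.val, by have := i.isLt; omega⟩ τ ?_
      · exact this
      · exact hτ
    · rw [hts0, hts_last]; exact hint2
  have hend1 : x (tp (Fin.last (M - 1 + 1))) = p := by rw [htp_last]
  have hend2 : x (ts (Fin.last (N - M + 1))) = xf := by rw [hts_last]; exact hend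
  have hQ1 : Q m f J x₀ (M - 1) (fun i => T (Fin.castLE (by omega) i)) p ≤
      cost m J (M - 1) x u tp :=
    sInf_le ⟨x, u, tp, hfeas1, hend1, rfl⟩
  have hQ2 : Q m f J p (N - M) (fun i => T ⟨M + i.val, by have := i.isLt; omega⟩) xf ≤
      cost m J (N - M) x u ts :=
    sInf_le ⟨x, u, ts, hfeas2, hend2, rfl⟩
  refine le_trans (add_le_add hQ1 hQ2) ?_
  unfold cost
  rw [htp0, htp_last, hts0, hts_last]
  have h1 : 0 ≤ ∫ τ in (t 0)..(t ⟨M, hMlt⟩), J (x τ, u τ, τ) :=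
    intervalIntegral.integral_nonneg ht0M (fun τ _ => hJ _ _ _)
  rw [← ENNReal.ofReal_add h1 (intervalIntegral.integral_nonneg htMlast (fun τ _ => hJ _ _ _)),
    intervalIntegral.integral_add_adjacent_intervals hint1 hint2]
end
end

section
/- Termination condition for optimality (Theorem 1): let h : ℝ² × ℝ² → ℝ≥0∞ be admissible, let x₀, x_f ∈ ℝ², let 𝒮* = [𝒯₀, …, 𝒯_N] be a complete sequence of sets, and let 𝒮′ = [𝒮₀, …, 𝒮_{M−1}] (M ≥ 1) be a sequence of sets such that Q(x₀, 𝒮*, x_f) ≤ Q̲(x₀, 𝒮′, x_f). Then no extension of 𝒮′ yields a better trajectory: for every finite sequence of sets 𝒮 = [𝒮₀, …, 𝒮_{M−1}, 𝒮_M, …, 𝒮_K] having 𝒮′ as a prefix (K ≥ M), one has Q(x₀, 𝒮, x_f) ≥ Q(x₀, 𝒮*, x_f). -/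
open scoped ENNReal
open MeasureTheory

noncomputable section

/-- A heuristic `h : ℝ² × ℝ² → ℝ≥0∞` is admissible if it underestimates the fixed-endpoint
value function for every pair of states and every finite sequence of sets. -/
def Admissible (m : ℕ) (f : E2 × (Fin m → ℝ) → E2) (J : E2 × (Fin m → ℝ) × ℝ → ℝ)
    (h : E2 → E2 → ℝ≥0∞) : Prop :=
  ∀ (p xf : E2) (K : ℕ) (S : Fin (K + 1) → Set E2), h p xf ≤ Q m f J p K S xf

/-- The lower bound `Q̲(x₀, [S 0, …, S M], xf) = V(x₀, [S 0, …, S M]) + ⨅_{p ∈ S M} h(p, xf)`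
on the cost of completing the (possibly incomplete) sequence `[S 0, …, S M]`. -/
def Qlow (m : ℕ) (f : E2 × (Fin m → ℝ) → E2) (J : E2 × (Fin m → ℝ) × ℝ → ℝ)
    (h : E2 → E2 → ℝ≥0∞) (x₀ : E2) (M : ℕ) (S : Fin (M + 1) → Set E2) (xf : E2) : ℝ≥0∞ :=
  V m f J x₀ M S + ⨅ p ∈ S (Fin.last M), h p xf

set_option maxHeartbeats 2000000 in
/-- **Theorem 1 (termination condition).** Let `h` be an admissible heuristic, let
`Tstar = [Tstar 0, …, Tstar N]` be a complete sequence (`x₀ ∈ Tstar 0`, `xf ∈ Tstar N`), and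
let `S' = [S' 0, …, S' M]` be a (nonempty) sequence with
`Q(x₀, Tstar, xf) ≤ Q̲(x₀, S', xf)`. Then no extension of `S'` yields a better trajectory:
every strictly longer sequence `S = [S 0, …, S K]` having `S'` as a prefix satisfies
`Q(x₀, S, xf) ≥ Q(x₀, Tstar, xf)`. -/
theorem termination_condition_optimal
    (m : ℕ) (f : E2 × (Fin m → ℝ) → E2) (J : E2 × (Fin m → ℝ) × ℝ → ℝ)
    (hJ : ∀ x u t, 0 ≤ J (x, u, t))
    (h : E2 → E2 → ℝ≥0∞) (hadm : Admissible m f J h)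
    (x₀ xf : E2)
    (N : ℕ) (Tstar : Fin (N + 1) → Set E2)
    (hc₀ : x₀ ∈ Tstar 0) (hcf : xf ∈ Tstar (Fin.last N))
    (M : ℕ) (S' : Fin (M + 1) → Set E2)
    (hterm : Q m f J x₀ N Tstar xf ≤ Qlow m f J h x₀ M S' xf)
    (K : ℕ) (hK : M + 1 ≤ K) (S : Fin (K + 1) → Set E2)
    (hpre : ∀ i : Fin (M + 1), S (Fin.castLE (by omega) i) = S' i) :
    Q m f J x₀ N Tstar xf ≤ Q m f J x₀ K S xf := by
  refine hterm.trans (le_sInf ?_)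
  rintro c ⟨x, u, t, hfeas, hend, rfl⟩
  obtain ⟨hmono, hstart, hderiv, hmem, hint⟩ := hfeas
  have hmono' : ∀ (a b : ℕ) (ha : a < K + 2) (hb : b < K + 2), a ≤ b →
      t ⟨a, ha⟩ ≤ t ⟨b, hb⟩ := fun a b ha hb hab => hmono hab
  have hlastF : (Fin.last (K + 1) : Fin (K + 2)) = ⟨K + 1, by omega⟩ := rfl
  rw [hlastF] at hderiv hint hend
  have h0F : (0 : Fin (K + 2)) = ⟨0, by omega⟩ := rfl
  rw [h0F] at hstart hderiv hint
  set L : ℕ := K - M - 1 with hL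
  have hKL : K = M + 1 + L := by omega
  -- prefix times
  have hmid : t ⟨0, by omega⟩ ≤ t ⟨M + 1, by omega⟩ := hmono' _ _ _ _ (by omega)
  have hmid' : t ⟨M + 1, by omega⟩ ≤ t ⟨K + 1, by omega⟩ := hmono' _ _ _ _ (by omega)
  -- integrability on subintervals
  have hint1 : IntervalIntegrable (fun τ => J (x τ, u τ, τ)) volume
      (t ⟨0, by omega⟩) (t ⟨M + 1, by omega⟩) := by
    apply hint.mono_set
    rw [Set.uIcc_of_le (hmid.trans hmid'), Set.uIcc_of_le hmid]
    exact Set.Icc_subset_Icc le_rfl hmid'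
  have hint2 : IntervalIntegrable (fun τ => J (x τ, u τ, τ)) volume
      (t ⟨M + 1, by omega⟩) (t ⟨K + 1, by omega⟩) := by
    apply hint.mono_set
    rw [Set.uIcc_of_le (hmid.trans hmid'), Set.uIcc_of_le hmid']
    exact Set.Icc_subset_Icc hmid le_rfl
  -- prefix trajectory
  have hfeas1 : Feasible m f J M S' x₀ x u (fun i => t ⟨i.val, by omega⟩) := by
    refine ⟨fun a b hab => hmono' _ _ _ _ hab, hstart, ?_, ?_, ?_⟩
    · intro τ hτ
      exact hderiv τ ⟨hτ.1, hτ.2.trans (hmono' _ _ _ _ (by simp [Fin.last]; omega))⟩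
    · intro i τ hτ
      have hiv : i.val < K + 1 := by omega
      have h1 : S ⟨i.val, hiv⟩ = S' i := by rw [← hpre i]; exact congrArg S (Fin.ext rfl)
      rw [← h1]
      exact hmem ⟨i.val, hiv⟩ τ hτ
    · exact hint1
  -- midpoint membership
  have hp : x (t ⟨M + 1, by omega⟩) ∈ S' (Fin.last M) := by
    have h1 : S ⟨M, by omega⟩ = S' (Fin.last M) := by
      rw [← hpre (Fin.last M)]; exact congrArg S (Fin.ext rfl)
    rw [← h1]
    exact hmem ⟨M, by omega⟩ (t ⟨M + 1, by omega⟩) ⟨hmono' M (M + 1) (by omega) (by omega) (by omega), le_rfl⟩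
  -- suffix sets and trajectory
  set S'' : Fin (L + 1) → Set E2 := fun j => S ⟨M + 1 + j.val, by omega⟩ with hS''
  have hfeas2 : Feasible m f J L S'' (x (t ⟨M + 1, by omega⟩)) x u
      (fun j => t ⟨M + 1 + j.val, by omega⟩) := by
    refine ⟨fun a b hab => hmono' _ _ _ _ (by simpa using hab), rfl, ?_, ?_, ?_⟩
    · intro τ hτ
      refine hderiv τ ⟨hmid.trans hτ.1, hτ.2.trans (hmono' _ _ _ _ ?_)⟩
      simp [Fin.last]; omega
    · intro j τ hτ
      exact hmem ⟨M + 1 + j.val, by omega⟩ τ hτ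
    · show IntervalIntegrable _ _ (t ⟨M + 1 + ((0 : Fin (L + 2))).val, by omega⟩)
        (t ⟨M + 1 + (Fin.last (L + 1)).val, by omega⟩)
      have he : (⟨M + 1 + (Fin.last (L + 1)).val, by omega⟩ : Fin (K + 2)) =
          ⟨K + 1, by omega⟩ := Fin.ext (by simp [Fin.last]; omega)
      have he0 : (⟨M + 1 + ((0 : Fin (L + 2))).val, by omega⟩ : Fin (K + 2)) =
          ⟨M + 1, by omega⟩ := rfl
      rw [he0, he]
      exact hint2
  have hend2 : x ((fun j : Fin (L + 2) => t ⟨M + 1 + j.val, by omega⟩)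
      (Fin.last (L + 1))) = xf := by
    have he : (⟨M + 1 + (Fin.last (L + 1)).val, by omega⟩ : Fin (K + 2)) =
        ⟨K + 1, by omega⟩ := by
      congr 1
      simp [Fin.last]; omega
    simp only [he]
    exact hend
  -- split the cost
  have hnn1 : 0 ≤ ∫ τ in (t ⟨0, by omega⟩)..(t ⟨M + 1, by omega⟩), J (x τ, u τ, τ) :=
    intervalIntegral.integral_nonneg hmid (fun τ _ => hJ _ _ _)
  have hnn2 : 0 ≤ ∫ τ in (t ⟨M + 1, by omega⟩)..(t ⟨K + 1, by omega⟩), J (x τ, u τ, τ) :=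
    intervalIntegral.integral_nonneg hmid' (fun τ _ => hJ _ _ _)
  have hsplit : cost m J K x u t =
      ENNReal.ofReal (∫ τ in (t ⟨0, by omega⟩)..(t ⟨M + 1, by omega⟩), J (x τ, u τ, τ)) +
      ENNReal.ofReal (∫ τ in (t ⟨M + 1, by omega⟩)..(t ⟨K + 1, by omega⟩),
        J (x τ, u τ, τ)) := by
    rw [cost, ← ENNReal.ofReal_add hnn1 hnn2,
      intervalIntegral.integral_add_adjacent_intervals hint1 hint2]
    rfl
  rw [hsplit, Qlow]
  gcongr
  · -- V ≤ prefix cost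
    apply sInf_le
    exact ⟨x, u, fun i => t ⟨i.val, by omega⟩, hfeas1, rfl⟩
  · -- inf h ≤ suffix cost
    refine le_trans (biInf_le _ hp) (le_trans (hadm _ xf L S'') (sInf_le ?_))
    refine ⟨x, u, fun j => t ⟨M + 1 + j.val, by omega⟩, hfeas2, hend2, ?_⟩
    show _ = ENNReal.ofReal (∫ τ in (t ⟨M + 1 + ((0 : Fin (L + 2))).val, by omega⟩)..(t
      ⟨M + 1 + (Fin.last (L + 1)).val, by omega⟩), J (x τ, u τ, τ))
    rw [show (⟨M + 1 + (Fin.last (L + 1)).val, by omega⟩ : Fin (K + 2)) =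
      ⟨K + 1, by omega⟩ from Fin.ext (by simp [Fin.last]; omega)]
    rfl
end
end

section
/- Global optimality of the returned sequence (core of Theorem 2): let h : ℝ² × ℝ² → ℝ≥0∞ be admissible, let x₀, x_f ∈ ℝ², let 𝒞 be a collection of complete finite sequences of sets, and let O be a collection of nonempty finite sequences of sets such that every 𝒮 ∈ 𝒞 has a prefix belonging to O. If a complete sequence 𝒮* satisfies Q(x₀, 𝒮*, x_f) ≤ Q̲(x₀, 𝒮′, x_f) for every 𝒮′ ∈ O, then 𝒮* is optimal over 𝒞: Q(x₀, 𝒮*, x_f) ≤ Q(x₀, 𝒮, x_f) for every 𝒮 ∈ 𝒞. -/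
open scoped ENNReal
open MeasureTheory

noncomputable section

/-- A nonempty finite sequence of sets in `ℝ²`: a length `n` (the sequence has `n + 1` sets)
together with the sets themselves. -/
def SetSeq : Type := Σ n : ℕ, Fin (n + 1) → Set E2

/-- A sequence of sets is complete (for `x₀`, `xf`) if the initial state lies in its first set
and the goal state lies in its last set. -/
def SetSeq.Complete (x₀ xf : E2) (S : SetSeq) : Prop :=
  x₀ ∈ S.2 0 ∧ xf ∈ S.2 (Fin.last S.1)

/-- `A` is a prefix of `B`: `A` is no longer than `B` and they agree on the indices of `A`. -/
def SetSeq.IsPrefix (A B : SetSeq) : Prop :=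
  ∃ hle : A.1 ≤ B.1, ∀ i : Fin (A.1 + 1), B.2 (Fin.castLE (by omega) i) = A.2 i

private lemma qlow_le_Q (m : ℕ) (f : E2 × (Fin m → ℝ) → E2) (J : E2 × (Fin m → ℝ) × ℝ → ℝ)
    (hJ : ∀ x u t, 0 ≤ J (x, u, t))
    (h : E2 → E2 → ℝ≥0∞) (hadm : Admissible m f J h)
    (x₀ xf : E2) (N M : ℕ) (T : Fin (N + 1) → Set E2) (S : Fin (M + 1) → Set E2)
    (hle : M ≤ N) (hpre : ∀ i : Fin (M + 1), T (Fin.castLE (by omega) i) = S i) :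
    Qlow m f J h x₀ M S xf ≤ Q m f J x₀ N T xf := by
  refine le_sInf ?_
  rintro c ⟨x, u, t, ⟨hmono, hx0, hderiv, hsets, hint⟩, hend, rfl⟩
  have hle2 : M + 2 ≤ N + 2 := by omega
  set mid : Fin (N + 2) := Fin.castLE hle2 (Fin.last (M + 1)) with hmid
  set t' : Fin (M + 2) → ℝ := fun i => t (Fin.castLE hle2 i) with ht'
  have e0 : Fin.castLE hle2 (0 : Fin (M + 2)) = (0 : Fin (N + 2)) := by
    ext; simp
  have h01 : t 0 ≤ t mid := hmono (by simp [Fin.le_def])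
  have h12 : t mid ≤ t (Fin.last (N + 1)) := by
    apply hmono; simp [Fin.le_def, hmid]; omega
  have hsub1 : Set.uIcc (t 0) (t mid) ⊆ Set.uIcc (t 0) (t (Fin.last (N + 1))) :=
    Set.uIcc_subset_uIcc Set.left_mem_uIcc
      (by rw [Set.uIcc_of_le (h01.trans h12)]; exact ⟨h01, h12⟩)
  have hsub2 : Set.uIcc (t mid) (t (Fin.last (N + 1))) ⊆
      Set.uIcc (t 0) (t (Fin.last (N + 1))) :=
    Set.uIcc_subset_uIcc
      (by rw [Set.uIcc_of_le (h01.trans h12)]; exact ⟨h01, h12⟩) Set.right_mem_uIcc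
  have hint1 : IntervalIntegrable (fun τ => J (x τ, u τ, τ)) volume (t 0) (t mid) :=
    hint.mono_set hsub1
  have hint2 : IntervalIntegrable (fun τ => J (x τ, u τ, τ)) volume (t mid)
      (t (Fin.last (N + 1))) := hint.mono_set hsub2
  -- prefix feasibility
  have hfeasP : Feasible m f J M S x₀ x u t' := by
    refine ⟨?_, ?_, ?_, ?_, ?_⟩
    · intro i j hij
      exact hmono (by rw [Fin.le_def]; exact hij)
    · show x (t (Fin.castLE hle2 0)) = x₀
      rw [e0]; exact hx0
    · intro τ hτ
      simp only [ht', e0] at hτ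
      exact hderiv τ ⟨hτ.1, hτ.2.trans h12⟩
    · intro i τ hτ
      have hcs : Fin.castLE hle2 i.castSucc =
          (Fin.castLE (by omega : M + 1 ≤ N + 1) i).castSucc := by ext; simp
      have hsc : Fin.castLE hle2 i.succ =
          (Fin.castLE (by omega : M + 1 ≤ N + 1) i).succ := by ext; simp
      rw [← hpre i]
      apply hsets (Fin.castLE (by omega) i) τ
      simp only [ht', hcs, hsc] at hτ
      exact hτ
    · show IntervalIntegrable _ volume (t (Fin.castLE hle2 0)) (t (Fin.castLE hle2 _))
      rw [e0]; exact hint1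
  -- the midpoint state
  set p : E2 := x (t mid) with hp
  have hpS : p ∈ S (Fin.last M) := by
    rw [← hpre (Fin.last M)]
    have hcs : ((Fin.castLE (by omega : M + 1 ≤ N + 1) (Fin.last M)).succ) = mid := by
      ext; simp [hmid]
    apply hsets (Fin.castLE (by omega) (Fin.last M)) (t mid)
    rw [hcs]
    exact ⟨hmono (by simp [Fin.le_def, hmid]), le_rfl⟩
  -- V bound
  have hV : V m f J x₀ M S ≤
      ENNReal.ofReal (∫ τ in (t 0)..(t mid), J (x τ, u τ, τ)) := by
    apply sInf_le
    refine ⟨x, u, t', hfeasP, ?_⟩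
    show _ = ENNReal.ofReal (∫ τ in (t (Fin.castLE hle2 0))..(t (Fin.castLE hle2 _)), _)
    rw [e0]
  -- heuristic bound via tail trajectory
  have htail : h p xf ≤
      ENNReal.ofReal (∫ τ in (t mid)..(t (Fin.last (N + 1))), J (x τ, u τ, τ)) := by
    refine (hadm p xf 0 (fun _ => Set.univ)).trans (sInf_le ?_)
    set s : Fin 2 → ℝ := fun j => if j = 0 then t mid else t (Fin.last (N + 1)) with hs
    have hs0 : s 0 = t mid := by simp [hs]
    have hs1 : s (Fin.last 1) = t (Fin.last (N + 1)) := by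
      simp [hs, Fin.last]
    refine ⟨x, u, s, ⟨?_, ?_, ?_, ?_, ?_⟩, ?_, ?_⟩
    · intro i j hij
      fin_cases i <;> fin_cases j
      · exact le_rfl
      · simpa [hs] using h12
      · exact absurd hij (by decide)
      · exact le_rfl
    · rw [hs0]
    · intro τ hτ
      rw [hs0, hs1] at hτ
      exact hderiv τ ⟨h01.trans hτ.1, hτ.2⟩
    · intro i τ _
      trivial
    · rw [hs0, hs1]; exact hint2
    · rw [hs1]; exact hend
    · show _ = ENNReal.ofReal (∫ τ in (s 0)..(s (Fin.last 1)), J (x τ, u τ, τ))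
      rw [hs0, hs1]
  have hinf : (⨅ q ∈ S (Fin.last M), h q xf) ≤ h p xf := iInf₂_le p hpS
  have hA : 0 ≤ ∫ τ in (t 0)..(t mid), J (x τ, u τ, τ) :=
    intervalIntegral.integral_nonneg h01 (fun τ _ => hJ _ _ _)
  have hB : 0 ≤ ∫ τ in (t mid)..(t (Fin.last (N + 1))), J (x τ, u τ, τ) :=
    intervalIntegral.integral_nonneg h12 (fun τ _ => hJ _ _ _)
  calc Qlow m f J h x₀ M S xf
      ≤ ENNReal.ofReal (∫ τ in (t 0)..(t mid), J (x τ, u τ, τ)) +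
        ENNReal.ofReal (∫ τ in (t mid)..(t (Fin.last (N + 1))), J (x τ, u τ, τ)) :=
        add_le_add hV (hinf.trans htail)
    _ = ENNReal.ofReal ((∫ τ in (t 0)..(t mid), J (x τ, u τ, τ)) +
        ∫ τ in (t mid)..(t (Fin.last (N + 1))), J (x τ, u τ, τ)) :=
        (ENNReal.ofReal_add hA hB).symm
    _ = cost m J N x u t := by
        rw [intervalIntegral.integral_add_adjacent_intervals hint1 hint2]; rfl

/-- **Theorem 2 (global optimality of the returned sequence).** Let `h` be an admissible
heuristic, `C` a collection of complete sequences, and `O` a collection of (nonempty)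
sequences such that every member of `C` has a prefix in `O`. If a complete sequence `Sstar`
satisfies `Q(x₀, Sstar, xf) ≤ Q̲(x₀, S', xf)` for every `S' ∈ O`, then `Sstar` is optimal
over `C`. -/
theorem returned_sequence_globally_optimal
    (m : ℕ) (f : E2 × (Fin m → ℝ) → E2) (J : E2 × (Fin m → ℝ) × ℝ → ℝ)
    (hJ : ∀ x u t, 0 ≤ J (x, u, t))
    (h : E2 → E2 → ℝ≥0∞) (hadm : Admissible m f J h)
    (x₀ xf : E2)
    (C O : Set SetSeq)
    (hC : ∀ S ∈ C, S.Complete x₀ xf)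
    (hCO : ∀ S ∈ C, ∃ S' ∈ O, SetSeq.IsPrefix S' S)
    (Sstar : SetSeq) (hstar : Sstar.Complete x₀ xf)
    (hterm : ∀ S' ∈ O, Q m f J x₀ Sstar.1 Sstar.2 xf ≤ Qlow m f J h x₀ S'.1 S'.2 xf) :
    ∀ S ∈ C, Q m f J x₀ Sstar.1 Sstar.2 xf ≤ Q m f J x₀ S.1 S.2 xf := by
  intro S hS
  obtain ⟨S', hO, hle, hpre⟩ := hCO S hS
  exact (hterm S' hO).trans
    (qlow_le_Q m f J hJ h hadm x₀ xf S.1 S'.1 S.2 S'.2 hle hpre)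
end
end
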